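/- For any 1-consistent randomized algorithm on the hardness instance, its expected competitive ratio conditional on candidate 1 arriving first (i.e. on π(1) = 1) is at most ε·1 + (1−ε)·(1/s). -/
import Mathlib


open Finset

/-- Value of candidate `j` in row `i` of the hardness construction (rows indexed `1..r`):
row 1 is `(s, 1, 1)`; for `m ≥ 1`, rows `2m` and `2m+1` contain `s^{m+1}, s^{m+2}` in
columns 2,3, arranged according to the parity of `m`. -/
noncomputable def rowVal (s : ℝ) (i : ℕ) : Fin 3 → ℝ :=
  if i = 1 then ![s, 1, 1]
  else if (i % 2 = 0 ↔ (i / 2) % 2 = 1) then ![s, s ^ (i / 2 + 1), s ^ (i / 2 + 2)]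
  else ![s, s ^ (i / 2 + 2), s ^ (i / 2 + 1)]

/-- Probability that row `i` is realized: row 1 with probability `ε`, each of the other
`r - 1` rows with probability `(1-ε)/(r-1)`. -/
noncomputable def rowProb (ε : ℝ) (r : ℕ) (i : ℕ) : ℝ :=
  if i = 1 then ε else (1 - ε) / ((r : ℝ) - 1)

/-- The competitive ratio obtained by the randomized algorithm `(a₁, a₂)` on value
vector `v` when the arrival order is `π` (candidate `π t` arrives at time `t`),
averaged over the algorithm's internal randomness. -/
noncomputable def ratio (a₁ : Fin 3 × ℝ → ℝ) (a₂ : (Fin 3 × ℝ) × (Fin 3 × ℝ) → ℝ)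
    (v : Fin 3 → ℝ) (π : Equiv.Perm (Fin 3)) : ℝ :=
  let x : Fin 3 → ℝ := fun t => v (π t)
  let M : ℝ := max (v 0) (max (v 1) (v 2))
  let p1 := a₁ (π 0, x 0)
  let p2 := a₂ ((π 0, x 0), (π 1, x 1))
  p1 * (x 0 / M) + (1 - p1) * (p2 * (x 1 / M) + (1 - p2) * (x 2 / M))

/-- The overall expected competitive ratio `ρ`: expectation over the random row
`I ∈ {1, …, r}` and the uniformly random arrival order `π`. -/
noncomputable def rho (s ε : ℝ) (r : ℕ) (a₁ : Fin 3 × ℝ → ℝ)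
    (a₂ : (Fin 3 × ℝ) × (Fin 3 × ℝ) → ℝ) : ℝ :=
  ∑ i ∈ Finset.Icc 1 r, rowProb ε r i *
    ((1 / 6) * ∑ π : Equiv.Perm (Fin 3), ratio a₁ a₂ (rowVal s i) π)

/-- The algorithm is 1-consistent: its expected competitive ratio conditional on
row 1 (the predicted row) being realized equals 1. -/
noncomputable def Consistent (s : ℝ) (a₁ : Fin 3 × ℝ → ℝ)
    (a₂ : (Fin 3 × ℝ) × (Fin 3 × ℝ) → ℝ) : Prop :=
  (1 / 6) * ∑ π : Equiv.Perm (Fin 3), ratio a₁ a₂ (rowVal s 1) π = 1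
/-- The expected competitive ratio conditional on candidate `c` arriving first:
the arrival order is uniform over the two permutations `π` with `π 0 = c`, and the
row `I ∈ {1, …, r}` is drawn according to `rowProb`. -/
noncomputable def condRho (s ε : ℝ) (r : ℕ) (a₁ : Fin 3 × ℝ → ℝ)
    (a₂ : (Fin 3 × ℝ) × (Fin 3 × ℝ) → ℝ) (c : Fin 3) : ℝ :=
  (1 / 2) * ∑ π ∈ Finset.univ.filter (fun π : Equiv.Perm (Fin 3) => π 0 = c),
    ∑ i ∈ Finset.Icc 1 r, rowProb ε r i * ratio a₁ a₂ (rowVal s i) π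

lemma rowVal_zero (s : ℝ) (i : ℕ) : rowVal s i 0 = s := by
  unfold rowVal; split_ifs <;> simp

lemma max_rowVal_one {s : ℝ} (hs : 1 < s) :
    max (rowVal s 1 0) (max (rowVal s 1 1) (rowVal s 1 2)) = s := by
  simp [rowVal]
  exact le_of_lt hs

lemma le_max_rowVal (s : ℝ) (i : ℕ) (hi : i ≠ 1) :
    s ^ (i / 2 + 2) ≤ max (rowVal s i 0) (max (rowVal s i 1) (rowVal s i 2)) := by
  unfold rowVal
  rw [if_neg hi]
  split_ifs with h
  · refine le_max_of_le_right (le_max_of_le_right ?_)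
    simp
  · refine le_max_of_le_right (le_max_of_le_left ?_)
    simp

lemma ratio_first {s : ℝ} (a₁ : Fin 3 × ℝ → ℝ) (a₂ : (Fin 3 × ℝ) × (Fin 3 × ℝ) → ℝ)
    (v : Fin 3 → ℝ) (π : Equiv.Perm (Fin 3)) (hπ : π 0 = 0) (hv : v 0 = s)
    (ha : a₁ (0, s) = 1) :
    ratio a₁ a₂ v π = s / max (v 0) (max (v 1) (v 2)) := by
  simp only [ratio, hπ, hv, ha]
  ring

lemma ratio_le_one (a₁ : Fin 3 × ℝ → ℝ) (a₂ : (Fin 3 × ℝ) × (Fin 3 × ℝ) → ℝ)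
    (v : Fin 3 → ℝ) (π : Equiv.Perm (Fin 3))
    (ha₁ : ∀ o, a₁ o ∈ Set.Icc (0 : ℝ) 1) (ha₂ : ∀ o, a₂ o ∈ Set.Icc (0 : ℝ) 1)
    (hv : ∀ j, 0 ≤ v j) (hM : 0 < max (v 0) (max (v 1) (v 2))) :
    ratio a₁ a₂ v π ≤ 1 := by
  have key : ∀ j : Fin 3, v j ≤ max (v 0) (max (v 1) (v 2)) := by
    intro j
    fin_cases j
    · exact le_max_left _ _
    · exact le_trans (le_max_left _ _) (le_max_right _ _)
    · exact le_trans (le_max_right _ _) (le_max_right _ _)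
  simp only [ratio]
  set M := max (v 0) (max (v 1) (v 2))
  have hd : ∀ j : Fin 3, v j / M ≤ 1 := fun j => div_le_one_of_le₀ (key j) hM.le
  have hd0 : ∀ j : Fin 3, 0 ≤ v j / M := fun j => div_nonneg (hv j) hM.le
  obtain ⟨hp0, hp1⟩ := ha₁ (π 0, v (π 0))
  obtain ⟨hq0, hq1⟩ := ha₂ ((π 0, v (π 0)), (π 1, v (π 1)))
  nlinarith [hd (π 0), hd (π 1), hd (π 2), hd0 (π 0), hd0 (π 1), hd0 (π 2),
    mul_nonneg (sub_nonneg.2 hp1) (mul_nonneg hq0 (sub_nonneg.2 (hd (π 1)))),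
    mul_nonneg (sub_nonneg.2 hp1) (mul_nonneg (sub_nonneg.2 hq1) (sub_nonneg.2 (hd (π 2)))),
    mul_nonneg hp0 (sub_nonneg.2 (hd (π 0)))]

lemma a1_eq_one {s : ℝ} (hs : 1 < s) (a₁ : Fin 3 × ℝ → ℝ)
    (a₂ : (Fin 3 × ℝ) × (Fin 3 × ℝ) → ℝ)
    (ha₁ : ∀ o, a₁ o ∈ Set.Icc (0 : ℝ) 1) (ha₂ : ∀ o, a₂ o ∈ Set.Icc (0 : ℝ) 1)
    (hcons : Consistent s a₁ a₂) : a₁ (0, s) = 1 := by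
  have hs0 : (0:ℝ) < s := lt_trans one_pos hs
  have hv : ∀ j, 0 ≤ rowVal s 1 j := by
    intro j
    unfold rowVal
    rw [if_pos rfl]
    fin_cases j <;> simp <;> linarith
  have hM : max (rowVal s 1 0) (max (rowVal s 1 1) (rowVal s 1 2)) = s := max_rowVal_one hs
  have hle : ∀ π : Equiv.Perm (Fin 3), ratio a₁ a₂ (rowVal s 1) π ≤ 1 := fun π =>
    ratio_le_one a₁ a₂ _ π ha₁ ha₂ hv (by rw [hM]; exact hs0)
  have hsum : ∑ π : Equiv.Perm (Fin 3), ratio a₁ a₂ (rowVal s 1) π = 6 := by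
    unfold Consistent at hcons; linarith
  have hone : ratio a₁ a₂ (rowVal s 1) 1 = 1 := by
    by_contra h
    have hlt : ratio a₁ a₂ (rowVal s 1) 1 < 1 := lt_of_le_of_ne (hle 1) h
    have hstrict := Finset.sum_lt_sum (fun π (_ : π ∈ Finset.univ) => hle π)
      ⟨1, Finset.mem_univ _, hlt⟩
    rw [hsum] at hstrict
    simp [Finset.sum_const, Finset.card_univ, Fintype.card_perm, Nat.factorial] at hstrict
  have hv1 : rowVal s 1 = ![s, 1, 1] := by simp [rowVal]
  rw [hv1] at hone
  simp only [ratio, Equiv.Perm.coe_one, id_eq, Matrix.cons_val_zero, Matrix.cons_val_one,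
    Matrix.head_cons, Matrix.cons_val_two, Matrix.tail_cons] at hone
  rw [max_self, max_eq_left hs.le, div_self (ne_of_gt hs0)] at hone
  obtain ⟨hp0, hp1⟩ := ha₁ (0, s)
  obtain ⟨hq0, hq1⟩ := ha₂ ((0, s), (1, 1))
  have h1s : 1 / s < 1 := by rw [div_lt_one hs0]; exact hs
  refine le_antisymm hp1 ?_
  nlinarith [hone, h1s, hp1, hp0]


/-- For any 1-consistent randomized algorithm on the hardness
instance, the expected competitive ratio conditional on candidate 1 arriving first
is at most `ε·1 + (1-ε)·(1/s)`. Candidate 1 is encoded as `0 : Fin 3`. -/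
theorem secretary_hardness_case_first_is_one (s ε : ℝ) (k : ℕ)
    (hs : 1 < s) (hk : 4 ≤ k) (hkeven : Even k) (hε0 : 0 < ε) (hε1 : ε < 1)
    (a₁ : Fin 3 × ℝ → ℝ) (a₂ : (Fin 3 × ℝ) × (Fin 3 × ℝ) → ℝ)
    (ha₁ : ∀ o, a₁ o ∈ Set.Icc (0 : ℝ) 1) (ha₂ : ∀ o, a₂ o ∈ Set.Icc (0 : ℝ) 1)
    (hcons : Consistent s a₁ a₂) :
    condRho s ε (2 * k - 1) a₁ a₂ 0 ≤ ε * 1 + (1 - ε) * (1 / s) := by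
  have hs0 : (0:ℝ) < s := lt_trans one_pos hs
  have ha : a₁ (0, s) = 1 := a1_eq_one hs a₁ a₂ ha₁ ha₂ hcons
  set r := 2 * k - 1 with hr
  have hr7 : 7 ≤ r := by omega
  have hrR : (6:ℝ) ≤ (r:ℝ) - 1 := by
    have : ((7:ℕ):ℝ) ≤ (r:ℝ) := Nat.cast_le.mpr hr7
    push_cast at this
    linarith
  have key : ∀ π ∈ Finset.univ.filter (fun π : Equiv.Perm (Fin 3) => π 0 = 0),
      (∑ i ∈ Finset.Icc 1 r, rowProb ε r i * ratio a₁ a₂ (rowVal s i) π)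
      = ∑ i ∈ Finset.Icc 1 r, rowProb ε r i *
          (s / max (rowVal s i 0) (max (rowVal s i 1) (rowVal s i 2))) := by
    intro π hπ
    rw [Finset.mem_filter] at hπ
    refine Finset.sum_congr rfl fun i _ => ?_
    rw [ratio_first a₁ a₂ _ π hπ.2 (rowVal_zero s i) ha]
  have hcard : (Finset.univ.filter (fun π : Equiv.Perm (Fin 3) => π 0 = 0)).card = 2 := by
    decide
  unfold condRho
  rw [Finset.sum_congr rfl key, Finset.sum_const, hcard]
  have hS : (∑ i ∈ Finset.Icc 1 r, rowProb ε r i *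
      (s / max (rowVal s i 0) (max (rowVal s i 1) (rowVal s i 2))))
      ≤ ε * 1 + (1 - ε) * (1 / s) := by
    have hsplit : Finset.Icc 1 r = insert 1 (Finset.Icc 2 r) := by
      ext x; simp only [Finset.mem_Icc, Finset.mem_insert]; omega
    rw [hsplit, Finset.sum_insert (by simp)]
    have h1 : rowProb ε r 1 *
        (s / max (rowVal s 1 0) (max (rowVal s 1 1) (rowVal s 1 2))) = ε := by
      rw [max_rowVal_one hs, div_self (ne_of_gt hs0), rowProb, if_pos rfl, mul_one]
    rw [h1]
    have hbound : ∀ i ∈ Finset.Icc 2 r, rowProb ε r i *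
        (s / max (rowVal s i 0) (max (rowVal s i 1) (rowVal s i 2)))
        ≤ (1 - ε) / ((r:ℝ) - 1) * (1 / s) := by
      intro i hi
      rw [Finset.mem_Icc] at hi
      have hi1 : i ≠ 1 := by omega
      rw [rowProb, if_neg hi1]
      have hMlb : s ^ (i / 2 + 2) ≤
          max (rowVal s i 0) (max (rowVal s i 1) (rowVal s i 2)) := le_max_rowVal s i hi1
      have hs2 : s * s ≤ s ^ (i / 2 + 2) := by
        have : s ^ 2 ≤ s ^ (i / 2 + 2) := pow_le_pow_right₀ hs.le (by omega)
        nlinarith [this]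
      have hM0 : (0:ℝ) < max (rowVal s i 0) (max (rowVal s i 1) (rowVal s i 2)) :=
        lt_of_lt_of_le (pow_pos hs0 _) hMlb
      have hdiv : s / max (rowVal s i 0) (max (rowVal s i 1) (rowVal s i 2)) ≤ 1 / s := by
        rw [div_le_div_iff₀ hM0 hs0]
        nlinarith [hMlb, hs2]
      have hc0 : (0:ℝ) ≤ (1 - ε) / ((r:ℝ) - 1) :=
        div_nonneg (by linarith) (by linarith)
      exact mul_le_mul_of_nonneg_left hdiv hc0
    have hsum2 := Finset.sum_le_sum hbound
    have hcard2 : (Finset.Icc 2 r).card = r - 1 := by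
      rw [Nat.card_Icc]; omega
    rw [Finset.sum_const, hcard2] at hsum2
    have hcast : ((r - 1 : ℕ) : ℝ) = (r:ℝ) - 1 := by
      rw [Nat.cast_sub (by omega)]; norm_num
    rw [nsmul_eq_mul, hcast] at hsum2
    have hrne : (r:ℝ) - 1 ≠ 0 := by linarith
    have : ((r:ℝ) - 1) * ((1 - ε) / ((r:ℝ) - 1) * (1 / s)) = (1 - ε) * (1 / s) := by
      field_simp
    linarith [hsum2, this.le, this.ge]
  rw [nsmul_eq_mul]
  push_cast
  linarith [hS]
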